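/- arXiv:1901.00279 — 2 statements merged into one kernel-verified Lean document; each statement's English description precedes it below -/
import Mathlib

section
/- Let Assumption 2 hold (for every i, ℓ_{y_i} is differentiable on ℝ^{d_y}, and any q ∈ ℝ^{d_y} with ∇ℓ_{y_i}(q) = 0 is a global minimum of ℓ_{y_i}), let Assumption 3 hold (for all i, j, if x_i = x_j then y_i = y_j), and let λ > 0. Then at every local minimum (θ, a, b, W) of the modified objective L̃: (i) θ is a global minimum of L; (ii) a = 0, so f(x;θ) + g(x;a,b,W) = f(x;θ) for all x ∈ ℝ^{d_x} and L̃(θ,a,b,W) = L(θ); and (iii) for every i ∈ {1,…,m}, the output f(x_i;θ) is a global minimum of the map q ↦ ℓ(q, y_i) on ℝ^{d_y}. -/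
/-!
The rescaling `(a, b) ↦ (eˢ a, b - s)` leaves the added neuron unchanged and multiplies the
penalty `λ‖a‖²` by `e^{2s}`, so a local minimum has `a = 0`. Once `a = 0`, the objective does not
depend on `W`; moving `aₖ` along `t eₖ` with `wₖ` frozen at any nearby value then gives the
first-order condition `∑ᵢ ∂ₖℓ_{yᵢ}(f(xᵢ;θ)) e^{⟨wₖ, xᵢ⟩} = 0` for all `wₖ` in an open set.
Exponentials `e^{⟨w, z⟩}` with distinct `z` are linearly independent on any open set (restrict
to a line `w₀ + t v` separating the `xᵢ` and take all derivatives at `t = 0`), and by label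
consistency the coefficients only depend on `xᵢ`, so every `∇ℓ_{yᵢ}(f(xᵢ;θ))` vanishes and
Assumption 2 makes `f(xᵢ;θ)` a global minimiser of `ℓ_{yᵢ}`.
-/

open scoped RealInnerProductSpace

noncomputable section

/-- The added neuron: `g(x; a, b, W)ₖ = aₖ · exp(⟨wₖ, x⟩ + bₖ)`. -/
def addedNeuron (dx dy : ℕ) (a b : EuclideanSpace ℝ (Fin dy))
    (W : Fin dy → EuclideanSpace ℝ (Fin dx)) (x : EuclideanSpace ℝ (Fin dx)) :
    EuclideanSpace ℝ (Fin dy) :=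
  WithLp.toLp 2 (fun k => a k * Real.exp (⟪W k, x⟫ + b k))

open Filter Topology Finset

theorem sum_mul_pow_eq_zero_of_sum_mul_exp_eventuallyEq_zero {ι : Type*} [Fintype ι]
    (d r : ι → ℝ) (h : (fun t => ∑ i, d i * Real.exp (t * r i)) =ᶠ[𝓝 0] 0) (n : ℕ) :
    ∑ i, d i * r i ^ n = 0 := by
  have hderiv : ∀ n : ℕ, deriv (fun t => ∑ i, d i * r i ^ n * Real.exp (t * r i)) =
      fun t => ∑ i, d i * r i ^ (n + 1) * Real.exp (t * r i) := by
    intro n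
    funext t
    refine HasDerivAt.deriv (HasDerivAt.fun_sum (F := ℝ) fun i _ => ?_)
    exact ((((hasDerivAt_id t).mul_const (r i)).exp).const_mul (d i * r i ^ n)).congr_deriv
      (by simp only [id, one_mul]; ring)
  have hall : ∀ n : ℕ, (fun t => ∑ i, d i * r i ^ n * Real.exp (t * r i)) =ᶠ[𝓝 0] 0 := by
    intro n
    induction n with
    | zero => simpa using h
    | succ n ih => simpa [hderiv n] using ih.deriv
  simpa using (hall n).eq_of_nhds

section Polynomial

open Polynomial

theorem sum_mul_eval_eq_zero_of_sum_mul_pow_eq_zero {R ι : Type*} [CommRing R] [Fintype ι]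
    (d r : ι → R) (h : ∀ n : ℕ, ∑ i, d i * r i ^ n = 0) (P : R[X]) :
    ∑ i, d i * P.eval (r i) = 0 := by
  induction P using Polynomial.induction_on' with
  | add P Q hP hQ => simp only [eval_add, mul_add, Finset.sum_add_distrib, hP, hQ, add_zero]
  | monomial n c =>
    simp only [eval_monomial, mul_left_comm _ c, ← Finset.mul_sum, h, mul_zero]

theorem sum_filter_eq_zero_of_sum_mul_pow_eq_zero {R ι : Type*} [CommRing R] [IsDomain R]
    [DecidableEq R] [Fintype ι] (d r : ι → R) (h : ∀ n : ℕ, ∑ i, d i * r i ^ n = 0) (ρ : R) :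
    ∑ i with r i = ρ, d i = 0 := by
  set P : R[X] := ∏ σ ∈ (Finset.univ.image r).erase ρ, (X - C σ)
  have hP : ∀ i, P.eval (r i) = if r i = ρ then P.eval ρ else 0 := by
    intro i
    split_ifs with hi
    · rw [hi]
    · rw [eval_prod]
      exact Finset.prod_eq_zero (Finset.mem_erase.2 ⟨hi, Finset.mem_image_of_mem r
        (Finset.mem_univ i)⟩) (by simp)
  have hρ : P.eval ρ ≠ 0 := by
    rw [eval_prod, Finset.prod_ne_zero_iff]
    intro σ hσ
    simpa [sub_eq_zero] using (Finset.ne_of_mem_erase hσ).symm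
  have := sum_mul_eval_eq_zero_of_sum_mul_pow_eq_zero d r h P
  simp only [hP, mul_ite, mul_zero, ← Finset.sum_filter, ← Finset.sum_mul] at this
  exact (mul_eq_zero.1 this).resolve_right hρ

end Polynomial

theorem exists_injOn_inner {E : Type*} [NormedAddCommGroup E] [InnerProductSpace ℝ E]
    {s : Set E} (hs : s.Finite) : ∃ v : E, s.InjOn (⟪v, ·⟫) := by
  let P := {q : E × E // q ∈ s ×ˢ s ∧ q.1 ≠ q.2}
  have : Finite P := ((hs.prod hs).subset fun _ hq => hq.1).to_subtype
  let hyperplane (q : P) : Submodule ℝ E := LinearMap.ker (innerₛₗ ℝ (q.1.1 - q.1.2))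
  have mem_hyperplane (q : P) (v : E) : v ∈ hyperplane q ↔ ⟪v, q.1.1⟫ = ⟪v, q.1.2⟫ := by
    simp [hyperplane, real_inner_comm, sub_eq_zero]
  by_contra! hv
  have hcover : ⋃ q, (hyperplane q : Set E) = Set.univ := by
    refine Set.eq_univ_of_forall fun v => ?_
    obtain ⟨z₁, hz₁, z₂, hz₂, heq, hne⟩ : ∃ z₁ ∈ s, ∃ z₂ ∈ s, ⟪v, z₁⟫ = ⟪v, z₂⟫ ∧ z₁ ≠ z₂ := by
      simpa [Set.InjOn] using hv v
    exact Set.mem_iUnion.2 ⟨⟨(z₁, z₂), ⟨hz₁, hz₂⟩, hne⟩, (mem_hyperplane _ v).2 heq⟩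
  obtain ⟨q, hq⟩ := Subspace.exists_eq_top_of_iUnion_eq_univ hcover
  have := (mem_hyperplane q (q.1.1 - q.1.2)).1 (hq ▸ Submodule.mem_top)
  rw [← sub_eq_zero, ← inner_sub_right, inner_self_eq_zero, sub_eq_zero] at this
  exact q.2.2 this

theorem EuclideanSpace.continuousLinearMap_eq_zero_of_apply_single {ι F : Type*} [Fintype ι]
    [DecidableEq ι] [NormedAddCommGroup F] [NormedSpace ℝ F]
    (L : EuclideanSpace ℝ ι →L[ℝ] F) (h : ∀ k, L (EuclideanSpace.single k 1) = 0) : L = 0 :=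
  ContinuousLinearMap.coe_injective <|
    (EuclideanSpace.basisFun ι ℝ).toBasis.ext fun k => by simpa using h k

theorem sum_filter_eq_zero_of_eventually_sum_mul_exp_inner_eq_zero {ι E : Type*} [Fintype ι]
    [NormedAddCommGroup E] [InnerProductSpace ℝ E] [DecidableEq E] (c : ι → ℝ) (x : ι → E)
    {w₀ : E} (h : ∀ᶠ w in 𝓝 w₀, ∑ i, c i * Real.exp ⟪w, x i⟫ = 0) (i₀ : ι) :
    ∑ i with x i = x i₀, c i = 0 := by
  obtain ⟨v, hv⟩ := exists_injOn_inner (Set.finite_range x)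
  have hline : (fun t => ∑ i, c i * Real.exp ⟪w₀, x i⟫ * Real.exp (t * ⟪v, x i⟫)) =ᶠ[𝓝 0] 0 := by
    have hlim : Tendsto (fun t : ℝ => w₀ + t • v) (𝓝 0) (𝓝 w₀) := by
      simpa using ((continuous_id.smul continuous_const).const_add w₀).tendsto (0 : ℝ)
    filter_upwards [hlim.eventually h] with t ht
    rw [Pi.zero_apply, ← ht]
    refine Finset.sum_congr rfl fun i _ => ?_
    rw [inner_add_left, real_inner_smul_left, Real.exp_add, mul_assoc]
  have hlevel := sum_filter_eq_zero_of_sum_mul_pow_eq_zero _ _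
    (sum_mul_pow_eq_zero_of_sum_mul_exp_eventuallyEq_zero _ _ hline) ⟪v, x i₀⟫
  have hfiber : univ.filter (fun i => ⟪v, x i⟫ = ⟪v, x i₀⟫) = univ.filter (x · = x i₀) :=
    Finset.filter_congr fun i _ =>
      ⟨hv (Set.mem_range_self i) (Set.mem_range_self i₀), congrArg (⟪v, ·⟫)⟩
  rw [hfiber, Finset.sum_congr rfl fun i hi => by rw [(Finset.mem_filter.1 hi).2],
    ← Finset.sum_mul] at hlevel
  exact (mul_eq_zero.1 hlevel).resolve_right (Real.exp_ne_zero _)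

theorem eq_zero_of_eventually_sum_mul_exp_inner_eq_zero {ι E : Type*} [Fintype ι]
    [NormedAddCommGroup E] [InnerProductSpace ℝ E] (c : ι → ℝ) (x : ι → E)
    (hc : ∀ i j, x i = x j → c i = c j)
    {w₀ : E} (h : ∀ᶠ w in 𝓝 w₀, ∑ i, c i * Real.exp ⟪w, x i⟫ = 0) (i₀ : ι) : c i₀ = 0 := by
  classical
  have hfiber := sum_filter_eq_zero_of_eventually_sum_mul_exp_inner_eq_zero c x h i₀
  rw [Finset.sum_congr rfl fun i hi => hc i i₀ (Finset.mem_filter.1 hi).2, Finset.sum_const,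
    nsmul_eq_mul] at hfiber
  have hcard : 0 < #{i | x i = x i₀} := Finset.card_pos.2 ⟨i₀, by simp⟩
  exact (mul_eq_zero.1 hfiber).resolve_left (by positivity)

theorem IsLocalMin.eventually_isLocalMin_snd {X Y β : Type*} [TopologicalSpace X]
    [TopologicalSpace Y] [Preorder β] {g : X × Y → β} {x₀ : X} {y₀ : Y}
    (h : IsLocalMin g (x₀, y₀)) (hconst : ∀ x, g (x, y₀) = g (x₀, y₀)) :
    ∀ᶠ x in 𝓝 x₀, IsLocalMin (fun y => g (x, y)) y₀ :=
  h.curry_nhds.mono fun x hx => by simpa only [IsLocalMin, IsMinFilter, hconst x] using hx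

theorem eq_zero_of_isLocalMin_add_mul_exp {C c : ℝ}
    (h : IsLocalMin (fun s => C + c * Real.exp (2 * s)) 0) : c = 0 := by
  have hderiv : HasDerivAt (fun s => C + c * Real.exp (2 * s)) (2 * c) 0 := by
    refine ((((hasDerivAt_id (0 : ℝ)).const_mul 2).exp).const_mul c |>.const_add C).congr_deriv ?_
    simp only [id, mul_zero, Real.exp_zero]
    ring
  simpa using h.hasDerivAt_eq_zero hderiv

section AddedNeuron

variable {dx dy : ℕ}

theorem addedNeuron_zero_left (b : EuclideanSpace ℝ (Fin dy))
    (W : Fin dy → EuclideanSpace ℝ (Fin dx)) : addedNeuron dx dy 0 b W = 0 := by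
  ext z k
  simp [addedNeuron]

theorem addedNeuron_exp_smul_sub (a b : EuclideanSpace ℝ (Fin dy))
    (W : Fin dy → EuclideanSpace ℝ (Fin dx)) (s : ℝ) :
    addedNeuron dx dy (Real.exp s • a) (b - s • WithLp.toLp 2 1) W = addedNeuron dx dy a b W := by
  ext z k
  simp only [addedNeuron, PiLp.smul_apply, PiLp.sub_apply, smul_eq_mul, Pi.one_apply, mul_one,
    ← add_sub_assoc, Real.exp_sub]
  field_simp

theorem addedNeuron_smul_single_update (b : EuclideanSpace ℝ (Fin dy))
    (W : Fin dy → EuclideanSpace ℝ (Fin dx)) (k : Fin dy) (w z : EuclideanSpace ℝ (Fin dx))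
    (t : ℝ) :
    addedNeuron dx dy (t • EuclideanSpace.single k 1) b (Function.update W k w) z =
      (t * Real.exp (⟪w, z⟫ + b k)) • EuclideanSpace.single k 1 := by
  ext j
  by_cases hj : j = k
  · subst hj; simp [addedNeuron]
  · simp [addedNeuron, hj]

/-- `L̃(θ, ·)` at a fixed `θ`, with the data term `g ↦ (1/m) ∑ᵢ ℓ(f(xᵢ;θ) + g(xᵢ), yᵢ)` replaced
by an arbitrary function `J` of the neuron `g`. -/
def regularizedNeuronObjective (dx dy : ℕ)
    (J : (EuclideanSpace ℝ (Fin dx) → EuclideanSpace ℝ (Fin dy)) → ℝ) (lam : ℝ)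
    (p : EuclideanSpace ℝ (Fin dy) × EuclideanSpace ℝ (Fin dy) ×
      (Fin dy → EuclideanSpace ℝ (Fin dx))) : ℝ :=
  J (addedNeuron dx dy p.1 p.2.1 p.2.2) + lam * ‖p.1‖ ^ 2

theorem eq_zero_of_isLocalMin_regularizedNeuronObjective
    {J : (EuclideanSpace ℝ (Fin dx) → EuclideanSpace ℝ (Fin dy)) → ℝ} {lam : ℝ} (hlam : lam ≠ 0)
    {a b : EuclideanSpace ℝ (Fin dy)} {W : Fin dy → EuclideanSpace ℝ (Fin dx)}
    (h : IsLocalMin (regularizedNeuronObjective dx dy J lam) (a, b, W)) : a = 0 := by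
  let rescale (s : ℝ) := (Real.exp s • a, b - s • WithLp.toLp 2 1, W)
  have hrescale : Continuous rescale := by fun_prop
  have hobj (s : ℝ) : regularizedNeuronObjective dx dy J lam (rescale s) =
      J (addedNeuron dx dy a b W) + lam * ‖a‖ ^ 2 * Real.exp (2 * s) := by
    simp only [regularizedNeuronObjective, rescale, addedNeuron_exp_smul_sub, norm_smul,
      Real.norm_eq_abs, abs_of_pos (Real.exp_pos s), mul_pow, ← Real.exp_nat_mul, Nat.cast_ofNat]
    ring
  have hstart : rescale 0 = (a, b, W) := by simp [rescale]
  have hmin := (hstart ▸ h).comp_continuous hrescale.continuousAt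
  simp only [Function.comp_def, hobj] at hmin
  simpa [hlam] using eq_zero_of_isLocalMin_add_mul_exp hmin

theorem eventually_sum_apply_single_mul_exp_inner_eq_zero {ι : Type*} [Fintype ι]
    {φ : ι → EuclideanSpace ℝ (Fin dy) → ℝ} {φ' : ι → EuclideanSpace ℝ (Fin dy) →L[ℝ] ℝ}
    (hφ : ∀ i, HasFDerivAt (φ i) (φ' i) 0) (x : ι → EuclideanSpace ℝ (Fin dx)) {lam : ℝ}
    {b : EuclideanSpace ℝ (Fin dy)} {W : Fin dy → EuclideanSpace ℝ (Fin dx)}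
    (h : IsLocalMin (regularizedNeuronObjective dx dy (fun g => ∑ i, φ i (g (x i))) lam)
      (0, b, W)) (k : Fin dy) :
    ∀ᶠ w in 𝓝 (W k), ∑ i, φ' i (EuclideanSpace.single k 1) * Real.exp ⟪w, x i⟫ = 0 := by
  set e : EuclideanSpace ℝ (Fin dy) := EuclideanSpace.single k 1
  let path (p : EuclideanSpace ℝ (Fin dx) × ℝ) := (p.2 • e, b, Function.update W k p.1)
  have hpath : Continuous path := by fun_prop
  have hstart : path (W k, 0) = (0, b, W) := by simp [path]
  have hmin := (hstart ▸ h).comp_continuous hpath.continuousAt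
  have hslices := hmin.eventually_isLocalMin_snd fun w => by
    simp [path, regularizedNeuronObjective, addedNeuron_zero_left]
  filter_upwards [hslices] with w hw
  have hobj (t : ℝ) : regularizedNeuronObjective dx dy (fun g => ∑ i, φ i (g (x i))) lam
      (path (w, t)) = ∑ i, φ i ((t * Real.exp (⟪w, x i⟫ + b k)) • e) + lam * t ^ 2 := by
    simp [path, regularizedNeuronObjective, addedNeuron_smul_single_update, e, norm_smul]
  have hderiv : HasDerivAt (fun t => regularizedNeuronObjective dx dy
      (fun g => ∑ i, φ i (g (x i))) lam (path (w, t)))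
      ((∑ i, φ' i e * Real.exp ⟪w, x i⟫) * Real.exp (b k)) 0 := by
    have hterm (i : ι) : HasDerivAt (fun t => φ i ((t * Real.exp (⟪w, x i⟫ + b k)) • e))
        (φ' i e * Real.exp ⟪w, x i⟫ * Real.exp (b k)) 0 := by
      refine ((hφ i).comp_hasDerivAt_of_eq 0 ((hasDerivAt_mul_const _).smul_const e)
        (by simp)).congr_deriv ?_
      rw [map_smul, smul_eq_mul, Real.exp_add]
      ring
    simp only [hobj]
    refine ((HasDerivAt.fun_sum (F := ℝ) fun i _ => hterm i).add
      ((hasDerivAt_pow 2 0).const_mul lam)).congr_deriv ?_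
    simp [Finset.sum_mul]
  have := hw.hasDerivAt_eq_zero hderiv
  exact (mul_eq_zero.1 this).resolve_right (Real.exp_ne_zero _)

theorem fderiv_eq_zero_of_isLocalMin_regularizedNeuronObjective {ι : Type*} [Fintype ι]
    {c : ℝ} (hc : c ≠ 0) {ℓ : ι → EuclideanSpace ℝ (Fin dy) → ℝ}
    {q : ι → EuclideanSpace ℝ (Fin dy)} (hℓ : ∀ i, DifferentiableAt ℝ (ℓ i) (q i))
    {x : ι → EuclideanSpace ℝ (Fin dx)} (hx : ∀ i j, x i = x j → ℓ i = ℓ j ∧ q i = q j)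
    {lam : ℝ} {b : EuclideanSpace ℝ (Fin dy)} {W : Fin dy → EuclideanSpace ℝ (Fin dx)}
    (h : IsLocalMin (regularizedNeuronObjective dx dy
      (fun g => ∑ i, c * ℓ i (q i + g (x i))) lam) (0, b, W)) (i : ι) :
    fderiv ℝ (ℓ i) (q i) = 0 := by
  have hφ (j : ι) : HasFDerivAt (fun v => c * ℓ j (q j + v)) (c • fderiv ℝ (ℓ j) (q j)) 0 :=
    ((hasFDerivAt_comp_add_left (q j)).2 (by rw [add_zero]; exact (hℓ j).hasFDerivAt)).const_mul c
  have hφ' (j k : ι) (hjk : x j = x k) : c • fderiv ℝ (ℓ j) (q j) = c • fderiv ℝ (ℓ k) (q k) := by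
    obtain ⟨hℓjk, hqjk⟩ := hx j k hjk
    rw [hℓjk, hqjk]
  have hcoord (k : Fin dy) : (c • fderiv ℝ (ℓ i) (q i)) (EuclideanSpace.single k 1) = 0 :=
    eq_zero_of_eventually_sum_mul_exp_inner_eq_zero _ x (fun j k hjk => by rw [hφ' j k hjk])
      (eventually_sum_apply_single_mul_exp_inner_eq_zero hφ x h k) i
  exact (smul_eq_zero.1
    (EuclideanSpace.continuousLinearMap_eq_zero_of_apply_single _ hcoord)).resolve_left hc

end AddedNeuron

theorem elimination_realizable_general
    (m dx dy dθ : ℕ)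
    (x : Fin m → EuclideanSpace ℝ (Fin dx))
    (y : Fin m → EuclideanSpace ℝ (Fin dy))
    (f : EuclideanSpace ℝ (Fin dx) → EuclideanSpace ℝ (Fin dθ) → EuclideanSpace ℝ (Fin dy))
    (ℓ : EuclideanSpace ℝ (Fin dy) → EuclideanSpace ℝ (Fin dy) → ℝ)
    -- Assumption 2: each ℓ_{y_i} is differentiable and its stationary points are global minima
    (hdiff : ∀ i : Fin m, Differentiable ℝ (fun q => ℓ q (y i)))
    (hstat : ∀ (i : Fin m) (q : EuclideanSpace ℝ (Fin dy)),
      gradient (fun q' => ℓ q' (y i)) q = 0 →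
        ∀ q' : EuclideanSpace ℝ (Fin dy), ℓ q (y i) ≤ ℓ q' (y i))
    -- Assumption 3: label consistency
    (hrealizable : ∀ i j : Fin m, x i = x j → y i = y j)
    (lam : ℝ) (hlam : 0 < lam)
    -- the original objective L
    (L : EuclideanSpace ℝ (Fin dθ) → ℝ)
    (hL : ∀ θ, L θ = (1 / (m : ℝ)) * ∑ i, ℓ (f (x i) θ) (y i))
    -- the modified objective L̃
    (Lt : EuclideanSpace ℝ (Fin dθ) → EuclideanSpace ℝ (Fin dy) → EuclideanSpace ℝ (Fin dy) →
      (Fin dy → EuclideanSpace ℝ (Fin dx)) → ℝ)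
    (hLt : ∀ θ a b W, Lt θ a b W =
      (1 / (m : ℝ)) * ∑ i, ℓ (f (x i) θ + addedNeuron dx dy a b W (x i)) (y i)
        + lam * ‖a‖ ^ 2)
    (θ : EuclideanSpace ℝ (Fin dθ)) (a b : EuclideanSpace ℝ (Fin dy))
    (W : Fin dy → EuclideanSpace ℝ (Fin dx))
    (hmin : IsLocalMin (fun p : EuclideanSpace ℝ (Fin dθ) × EuclideanSpace ℝ (Fin dy) ×
        EuclideanSpace ℝ (Fin dy) × (Fin dy → EuclideanSpace ℝ (Fin dx)) =>
        Lt p.1 p.2.1 p.2.2.1 p.2.2.2) (θ, a, b, W)) :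
    (∀ θ' : EuclideanSpace ℝ (Fin dθ), L θ ≤ L θ') ∧
    (a = 0 ∧
      (∀ x' : EuclideanSpace ℝ (Fin dx),
        f x' θ + addedNeuron dx dy a b W x' = f x' θ) ∧
      Lt θ a b W = L θ) ∧
    (∀ (i : Fin m) (q : EuclideanSpace ℝ (Fin dy)), ℓ (f (x i) θ) (y i) ≤ ℓ q (y i)) := by
  let J (g : EuclideanSpace ℝ (Fin dx) → EuclideanSpace ℝ (Fin dy)) :=
    ∑ i, (1 / (m : ℝ)) * ℓ (f (x i) θ + g (x i)) (y i)
  have hLtJ (a' b' W') : Lt θ a' b' W' = regularizedNeuronObjective dx dy J lam (a', b', W') := by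
    rw [hLt, regularizedNeuronObjective, Finset.mul_sum]
  have hslice : IsLocalMin (regularizedNeuronObjective dx dy J lam) (a, b, W) := by
    have := hmin.comp_continuous (g := fun p => (θ, p)) (b := (a, b, W))
      (continuous_const.prodMk continuous_id).continuousAt
    simpa only [Function.comp_def, hLtJ] using this
  obtain rfl := eq_zero_of_isLocalMin_regularizedNeuronObjective hlam.ne' hslice
  have hglobal (i : Fin m) (q : EuclideanSpace ℝ (Fin dy)) : ℓ (f (x i) θ) (y i) ≤ ℓ q (y i) := by
    refine hstat i _ ?_ q
    have := fderiv_eq_zero_of_isLocalMin_regularizedNeuronObjective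
      (one_div_ne_zero (Nat.cast_ne_zero.2 i.pos.ne')) (fun j => hdiff j _)
      (fun j k hjk => ⟨by rw [hrealizable j k hjk], by rw [hjk]⟩) hslice i
    simp [gradient, this]
  refine ⟨fun θ' => ?_, ⟨rfl, by simp [addedNeuron_zero_left], ?_⟩, hglobal⟩
  · rw [hL, hL]
    gcongr with i
    exact hglobal i _
  · simp [hLt, hL, addedNeuron_zero_left]

/-- Under Assumption 2 (each `ℓ_{y_i}` is differentiable and every
stationary point of `ℓ_{y_i}` is a global minimum of `ℓ_{y_i}`), Assumption 3 (label
consistency: `x_i = x_j → y_i = y_j`) and `λ > 0`, at every local minimum `(θ, a, b, W)`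
of `L̃`: (i) `θ` is a global minimum of `L`; (ii) `a = 0`, so `f + g = f` and
`L̃(θ,a,b,W) = L(θ)`; (iii) each `f(x_i; θ)` is a global minimum of `q ↦ ℓ(q, y_i)`. -/
theorem elimination_realizable
    (m dx dy dθ : ℕ) (hm : 0 < m) (hdx : 0 < dx) (hdy : 0 < dy) (hdθ : 0 < dθ)
    (x : Fin m → EuclideanSpace ℝ (Fin dx))
    (y : Fin m → EuclideanSpace ℝ (Fin dy))
    (f : EuclideanSpace ℝ (Fin dx) → EuclideanSpace ℝ (Fin dθ) → EuclideanSpace ℝ (Fin dy))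
    (ℓ : EuclideanSpace ℝ (Fin dy) → EuclideanSpace ℝ (Fin dy) → ℝ)
    -- Assumption 2: each ℓ_{y_i} is differentiable and its stationary points are global minima
    (hdiff : ∀ i : Fin m, Differentiable ℝ (fun q => ℓ q (y i)))
    (hstat : ∀ (i : Fin m) (q : EuclideanSpace ℝ (Fin dy)),
      gradient (fun q' => ℓ q' (y i)) q = 0 →
        ∀ q' : EuclideanSpace ℝ (Fin dy), ℓ q (y i) ≤ ℓ q' (y i))
    -- Assumption 3: label consistency
    (hrealizable : ∀ i j : Fin m, x i = x j → y i = y j)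
    (lam : ℝ) (hlam : 0 < lam)
    -- the original objective L
    (L : EuclideanSpace ℝ (Fin dθ) → ℝ)
    (hL : ∀ θ, L θ = (1 / (m : ℝ)) * ∑ i, ℓ (f (x i) θ) (y i))
    -- the modified objective L̃
    (Lt : EuclideanSpace ℝ (Fin dθ) → EuclideanSpace ℝ (Fin dy) → EuclideanSpace ℝ (Fin dy) →
      (Fin dy → EuclideanSpace ℝ (Fin dx)) → ℝ)
    (hLt : ∀ θ a b W, Lt θ a b W =
      (1 / (m : ℝ)) * ∑ i, ℓ (f (x i) θ + addedNeuron dx dy a b W (x i)) (y i)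
        + lam * ‖a‖ ^ 2)
    (θ : EuclideanSpace ℝ (Fin dθ)) (a b : EuclideanSpace ℝ (Fin dy))
    (W : Fin dy → EuclideanSpace ℝ (Fin dx))
    (hmin : IsLocalMin (fun p : EuclideanSpace ℝ (Fin dθ) × EuclideanSpace ℝ (Fin dy) ×
        EuclideanSpace ℝ (Fin dy) × (Fin dy → EuclideanSpace ℝ (Fin dx)) =>
        Lt p.1 p.2.1 p.2.2.1 p.2.2.2) (θ, a, b, W)) :
    (∀ θ' : EuclideanSpace ℝ (Fin dθ), L θ ≤ L θ') ∧
    (a = 0 ∧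
      (∀ x' : EuclideanSpace ℝ (Fin dx),
        f x' θ + addedNeuron dx dy a b W x' = f x' θ) ∧
      Lt θ a b W = L θ) ∧
    (∀ (i : Fin m) (q : EuclideanSpace ℝ (Fin dy)), ℓ (f (x i) θ) (y i) ≤ ℓ q (y i)) :=
  elimination_realizable_general m dx dy dθ x y f ℓ hdiff hstat hrealizable lam hlam L hL Lt hLt θ a
    b W hmin
end
end

section
/- (PGB necessary condition of local minima, inequality form.) Let Q(z) = (1/m)·∑_{i=1}^m [Q_i(φ_i(z)) + R_i(ψ_i(z))], where each Q_i : ℝ^{d_φ} → ℝ and R_i : ℝ^{d_ψ} → ℝ is differentiable, convex, and nonnegative, and each φ_i : ℝ^{d_z} → ℝ^{d_φ} and ψ_i : ℝ^{d_z} → ℝ^{d_ψ} is differentiable. Assume there exist h : ℝ^{d_z} → ℝ^{d_z} and a real number ρ ≠ 0 such that for all i and all z ∈ ℝ^{d_z}: φ_i(z) = ∑_{k=1}^{d_z} h(z)_k·∂_k φ_i(z) and ψ_i(z) = ρ·∑_{k=1}^{d_z} h(z)_k·∂_k ψ_i(z). Then for every local minimum z of Q there exists ε₀ > 0 such that for every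 ε ∈ [0, ε₀), every finite list S = (v_1,…,v_s) of vectors in V[z,ε], and every matrix α ∈ ℝ^{d_z × s}: Q(z) ≤ (1/m)·∑_{i=1}^m [Q_i(φ_i^z(α,ε,S)) + R_i(ψ_i^z(α,ε,S))] + ((ρ−1)/(ρ·m))·∑_{i=1}^m ⟨∇R_i(ψ_i(z)), ψ_i(z)⟩. -/
open scoped RealInnerProductSpace

/-! Near a local minimum `z`, every point of the level set `Q = Q z` is again a local minimum,
so the derivative of `∑ᵢ Qᵢ ∘ φᵢ + Rᵢ ∘ ψᵢ` vanishes at each `z + ε vⱼ`. As `φᵢ, ψᵢ` take the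
same values there as at `z`, the outer derivatives are those at `z`, and linearity gives
`∑ᵢ DQᵢ(φᵢᶻ) + DRᵢ(ψᵢᶻ) = 0`; stationarity at `z` in the direction `h z` gives the Euler
identity `∑ᵢ DQᵢ(φᵢ z) + ρ⁻¹ DRᵢ(ψᵢ z) = 0`. Summing the tangent-line inequalities of the convex
`Qᵢ, Rᵢ` at `φᵢ z, ψᵢ z` and using both identities leaves exactly the correction term
`(1 - ρ⁻¹) ∑ᵢ DRᵢ(ψᵢ z)(ψᵢ z)`. -/

theorem ConvexOn.add_fderiv_sub_le {E : Type*} [NormedAddCommGroup E] [NormedSpace ℝ E]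
    {f : E → ℝ} {x : E} (hc : ConvexOn ℝ Set.univ f) (hd : DifferentiableAt ℝ f x) (y : E) :
    f x + fderiv ℝ f x (y - x) ≤ f y := by
  have hline : ConvexOn ℝ Set.univ (f ∘ AffineMap.lineMap (k := ℝ) x y) := hc.comp_affineMap _
  have hderiv : HasDerivAt (f ∘ AffineMap.lineMap (k := ℝ) x y) (fderiv ℝ f x (y - x)) 0 := by
    exact hd.hasFDerivAt.comp_hasDerivAt_of_eq 0 AffineMap.hasDerivAt_lineMap
      (AffineMap.lineMap_apply_zero x y).symm
  have := hline.le_slope_of_hasDerivAt (Set.mem_univ 0) (Set.mem_univ 1) zero_lt_one hderiv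
  simpa [slope_def_field, map_sub, le_sub_iff_add_le'] using this

theorem IsLocalMin.eventually_isLocalMin_of_eq {X : Type*} [TopologicalSpace X] {f : X → ℝ}
    {z : X} (hz : IsLocalMin f z) : ∀ᶠ w in nhds z, f w = f z → IsLocalMin f w := by
  obtain ⟨U, hU, hUo, hzU⟩ := mem_nhds_iff.mp hz
  filter_upwards [hUo.mem_nhds hzU] with w hw hfw
  exact IsMinOn.isLocalMin (fun y hy => hfw ▸ hU hy) (hUo.mem_nhds hw)

theorem EuclideanSpace.sum_smul_apply_single {n : ℕ} {F : Type*} [AddCommGroup F] [Module ℝ F]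
    (L : EuclideanSpace ℝ (Fin n) →ₗ[ℝ] F) (x : EuclideanSpace ℝ (Fin n)) :
    ∑ k, x k • L (EuclideanSpace.single k 1) = L x := by
  conv_rhs => rw [← (EuclideanSpace.basisFun (Fin n) ℝ).sum_repr x]
  simp

theorem ContinuousLinearMap.sum_sum_smul_apply {R M H κ σ : Type*} [Fintype κ] [Fintype σ]
    [Semiring R] [TopologicalSpace M] [AddCommMonoid M] [Module R M]
    [TopologicalSpace H] [AddCommMonoid H] [Module R H]
    (D : σ → M →L[R] H) (α : κ → σ → R) (e : κ → M) :
    ∑ k, ∑ j, α k j • D j (e k) = ∑ j, D j (∑ k, α k j • e k) := by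
  simp only [map_sum, map_smul]
  exact Finset.sum_comm

section Loss

variable {ι σ E F G : Type*} [Fintype ι] [Fintype σ]
  [NormedAddCommGroup E] [NormedSpace ℝ E] [NormedAddCommGroup F] [NormedSpace ℝ F]
  [NormedAddCommGroup G] [NormedSpace ℝ G]
  {Qi : ι → F → ℝ} {Ri : ι → G → ℝ} {φ : ι → E → F} {ψ : ι → E → G}

theorem IsLocalMin.sum_fderiv_comp_eq_zero {Q : E → ℝ} {c : ℝ} {w : E}
    (hQ : ∀ x, Q x = c * ∑ i, (Qi i (φ i x) + Ri i (ψ i x)))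
    (hQd : ∀ i, DifferentiableAt ℝ (Qi i) (φ i w)) (hRd : ∀ i, DifferentiableAt ℝ (Ri i) (ψ i w))
    (hφd : ∀ i, DifferentiableAt ℝ (φ i) w) (hψd : ∀ i, DifferentiableAt ℝ (ψ i) w)
    (hw : IsLocalMin Q w) (u : E) :
    c * ∑ i, (fderiv ℝ (Qi i) (φ i w) (fderiv ℝ (φ i) w u)
      + fderiv ℝ (Ri i) (ψ i w) (fderiv ℝ (ψ i) w u)) = 0 := by
  have hL : HasFDerivAt Q (c • ∑ i, ((fderiv ℝ (Qi i) (φ i w)).comp (fderiv ℝ (φ i) w)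
      + (fderiv ℝ (Ri i) (ψ i w)).comp (fderiv ℝ (ψ i) w))) w := by
    rw [funext hQ]
    exact (HasFDerivAt.fun_sum fun i _ => ((hQd i).hasFDerivAt.comp w (hφd i).hasFDerivAt).add
      ((hRd i).hasFDerivAt.comp w (hψd i).hasFDerivAt)).const_mul c
  simpa using congrArg (· u) (hw.hasFDerivAt_eq_zero hL)

theorem ConvexOn.sum_le_sum_add_sum_fderiv {f : ι → F → ℝ} {x : ι → F}
    (hc : ∀ i, ConvexOn ℝ Set.univ (f i)) (hd : ∀ i, DifferentiableAt ℝ (f i) (x i))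
    (y : ι → F) :
    ∑ i, f i (x i) ≤ ∑ i, f i (y i) + ∑ i, fderiv ℝ (f i) (x i) (x i - y i) := by
  rw [← Finset.sum_add_distrib]
  refine Finset.sum_le_sum fun i _ => ?_
  have := (hc i).add_fderiv_sub_le (hd i) (y i)
  rw [map_sub] at this ⊢
  linarith

theorem le_pgb_add_of_stationary {c ρ : ℝ} (hc : 0 ≤ c)
    (hQc : ∀ i, ConvexOn ℝ Set.univ (Qi i)) (hRc : ∀ i, ConvexOn ℝ Set.univ (Ri i))
    {p : ι → F} {q : ι → G}
    (hQd : ∀ i, DifferentiableAt ℝ (Qi i) (p i)) (hRd : ∀ i, DifferentiableAt ℝ (Ri i) (q i))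
    (Dφ : σ → ι → E →L[ℝ] F) (Dψ : σ → ι → E →L[ℝ] G)
    (hstat : ∀ j u, c * ∑ i, (fderiv ℝ (Qi i) (p i) (Dφ j i u)
      + fderiv ℝ (Ri i) (q i) (Dψ j i u)) = 0)
    (hEuler : c * ∑ i, (fderiv ℝ (Qi i) (p i) (p i)
      + ρ⁻¹ * fderiv ℝ (Ri i) (q i) (q i)) = 0)
    (a : σ → E) :
    c * ∑ i, (Qi i (p i) + Ri i (q i)) ≤
      c * ∑ i, (Qi i (∑ j, Dφ j i (a j)) + Ri i (∑ j, Dψ j i (a j)))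
        + c * (1 - ρ⁻¹) * ∑ i, fderiv ℝ (Ri i) (q i) (q i) := by
  have hQ := ConvexOn.sum_le_sum_add_sum_fderiv hQc hQd fun i => ∑ j, Dφ j i (a j)
  have hR := ConvexOn.sum_le_sum_add_sum_fderiv hRc hRd fun i => ∑ j, Dψ j i (a j)
  have hpgb : c * ∑ i, (fderiv ℝ (Qi i) (p i) (∑ j, Dφ j i (a j))
      + fderiv ℝ (Ri i) (q i) (∑ j, Dψ j i (a j))) = 0 := by
    simp only [map_sum, ← Finset.sum_add_distrib]
    rw [Finset.sum_comm, Finset.mul_sum]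
    exact Finset.sum_eq_zero fun j _ => hstat j (a j)
  simp only [map_sub, Finset.sum_sub_distrib, Finset.sum_add_distrib, ← Finset.mul_sum]
    at hQ hR hpgb hEuler ⊢
  linear_combination c * (hQ + hR) - hpgb + hEuler

end Loss

theorem pgb_necessary_condition_general
    (m dz dphi dpsi : ℕ)
    (Qi : Fin m → EuclideanSpace ℝ (Fin dphi) → ℝ)
    (Ri : Fin m → EuclideanSpace ℝ (Fin dpsi) → ℝ)
    (φ : Fin m → EuclideanSpace ℝ (Fin dz) → EuclideanSpace ℝ (Fin dphi))
    (ψ : Fin m → EuclideanSpace ℝ (Fin dz) → EuclideanSpace ℝ (Fin dpsi))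
    (hQd : ∀ i, Differentiable ℝ (Qi i))
    (hQc : ∀ i, ConvexOn ℝ Set.univ (Qi i))
    (hRd : ∀ i, Differentiable ℝ (Ri i))
    (hRc : ∀ i, ConvexOn ℝ Set.univ (Ri i))
    (hφd : ∀ i, Differentiable ℝ (φ i))
    (hψd : ∀ i, Differentiable ℝ (ψ i))
    (h : EuclideanSpace ℝ (Fin dz) → EuclideanSpace ℝ (Fin dz)) (ρ : ℝ) (hρ : ρ ≠ 0)
    (hhφ : ∀ i z, φ i z = ∑ k, h z k • fderiv ℝ (φ i) z (EuclideanSpace.single k 1))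
    (hhψ : ∀ i z, ψ i z = ρ • ∑ k, h z k • fderiv ℝ (ψ i) z (EuclideanSpace.single k 1))
    (Q : EuclideanSpace ℝ (Fin dz) → ℝ)
    (hQ : ∀ z, Q z = (1 / (m : ℝ)) * ∑ i, (Qi i (φ i z) + Ri i (ψ i z)))
    (z : EuclideanSpace ℝ (Fin dz)) (hz : IsLocalMin Q z) :
    ∃ ε₀ > (0 : ℝ), ∀ ε : ℝ, 0 ≤ ε → ε < ε₀ →
      ∀ (s : ℕ) (S : Fin s → EuclideanSpace ℝ (Fin dz)),
        (∀ j, ‖S j‖ ≤ 1 ∧ ∀ i, φ i (z + ε • S j) = φ i z ∧ ψ i (z + ε • S j) = ψ i z) →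
        ∀ α : Fin dz → Fin s → ℝ,
          Q z ≤ (1 / (m : ℝ)) * ∑ i,
              (Qi i (∑ k, ∑ j, α k j •
                  fderiv ℝ (φ i) (z + ε • S j) (EuclideanSpace.single k 1)) +
               Ri i (∑ k, ∑ j, α k j •
                  fderiv ℝ (ψ i) (z + ε • S j) (EuclideanSpace.single k 1)))
            + ((ρ - 1) / (ρ * m)) * ∑ i, ⟪gradient (Ri i) (ψ i z), ψ i z⟫ := by
  obtain ⟨r, hr, hlevel⟩ := Metric.eventually_nhds_iff_ball.mp hz.eventually_isLocalMin_of_eq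
  refine ⟨r, hr, fun ε hε0 hε s S hS α => ?_⟩
  have hstat : ∀ j u, (1 / (m : ℝ)) * ∑ i,
      (fderiv ℝ (Qi i) (φ i z) (fderiv ℝ (φ i) (z + ε • S j) u)
        + fderiv ℝ (Ri i) (ψ i z) (fderiv ℝ (ψ i) (z + ε • S j) u)) = 0 := by
    intro j u
    have hφS i : φ i (z + ε • S j) = φ i z := ((hS j).2 i).1
    have hψS i : ψ i (z + ε • S j) = ψ i z := ((hS j).2 i).2
    have hmem : z + ε • S j ∈ Metric.ball z r := by
      rw [mem_ball_iff_norm, add_sub_cancel_left, norm_smul, Real.norm_of_nonneg hε0]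
      nlinarith [(hS j).1, norm_nonneg (S j)]
    have hmin := hlevel _ hmem (by simp only [hQ, hφS, hψS])
    simpa only [hφS, hψS] using hmin.sum_fderiv_comp_eq_zero hQ (fun i => hQd i _)
      (fun i => hRd i _) (fun i => hφd i _) (fun i => hψd i _) u
  have hφz i : fderiv ℝ (φ i) z (h z) = φ i z := by
    rw [hhφ i z]
    exact (EuclideanSpace.sum_smul_apply_single (fderiv ℝ (φ i) z).toLinearMap (h z)).symm
  have hψz i : fderiv ℝ (ψ i) z (h z) = ρ⁻¹ • ψ i z := by
    rw [hhψ i z, inv_smul_smul₀ hρ]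
    exact (EuclideanSpace.sum_smul_apply_single (fderiv ℝ (ψ i) z).toLinearMap (h z)).symm
  have hEuler : (1 / (m : ℝ)) * ∑ i, (fderiv ℝ (Qi i) (φ i z) (φ i z)
      + ρ⁻¹ * fderiv ℝ (Ri i) (ψ i z) (ψ i z)) = 0 := by
    simpa only [hφz, hψz, map_smul, smul_eq_mul] using hz.sum_fderiv_comp_eq_zero hQ
      (fun i => hQd i _) (fun i => hRd i _) (fun i => hφd i _) (fun i => hψd i _) (h z)
  have hcoef : (ρ - 1) / (ρ * m) = 1 / (m : ℝ) * (1 - ρ⁻¹) := by field_simp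
  simpa only [ContinuousLinearMap.sum_sum_smul_apply, hcoef, inner_gradient_left, ← hQ] using
    le_pgb_add_of_stationary (by positivity) hQc hRc (fun i => hQd i _) (fun i => hRd i _)
      (fun j i => fderiv ℝ (φ i) (z + ε • S j)) (fun j i => fderiv ℝ (ψ i) (z + ε • S j))
      hstat hEuler fun j => ∑ k, α k j • EuclideanSpace.single k 1

/-- **PGB necessary condition of local minima, inequality form.**
For `Q(z) = (1/m) ∑ᵢ [Qᵢ(φᵢ(z)) + Rᵢ(ψᵢ(z))]` with `Qᵢ, Rᵢ` differentiable, convex and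
nonnegative, `φᵢ, ψᵢ` differentiable, and assuming
`φᵢ(z) = ∑ₖ h(z)ₖ ∂ₖφᵢ(z)` and `ψᵢ(z) = ρ ∑ₖ h(z)ₖ ∂ₖψᵢ(z)` for some `h` and `ρ ≠ 0`,
every local minimum `z` of `Q` satisfies: there is `ε₀ > 0` such that for all
`ε ∈ [0, ε₀)`, every finite list `S` of vectors in `V[z,ε]` and every `α`,
`Q(z) ≤ (1/m) ∑ᵢ [Qᵢ(φᵢᶻ(α,ε,S)) + Rᵢ(ψᵢᶻ(α,ε,S))]
        + ((ρ−1)/(ρ m)) ∑ᵢ ⟨∇Rᵢ(ψᵢ(z)), ψᵢ(z)⟩`. -/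
theorem pgb_necessary_condition
    (m dz dphi dpsi : ℕ) (hm : 0 < m)
    (Qi : Fin m → EuclideanSpace ℝ (Fin dphi) → ℝ)
    (Ri : Fin m → EuclideanSpace ℝ (Fin dpsi) → ℝ)
    (φ : Fin m → EuclideanSpace ℝ (Fin dz) → EuclideanSpace ℝ (Fin dphi))
    (ψ : Fin m → EuclideanSpace ℝ (Fin dz) → EuclideanSpace ℝ (Fin dpsi))
    (hQd : ∀ i, Differentiable ℝ (Qi i))
    (hQc : ∀ i, ConvexOn ℝ Set.univ (Qi i))
    (hQ0 : ∀ i q, 0 ≤ Qi i q)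
    (hRd : ∀ i, Differentiable ℝ (Ri i))
    (hRc : ∀ i, ConvexOn ℝ Set.univ (Ri i))
    (hR0 : ∀ i q, 0 ≤ Ri i q)
    (hφd : ∀ i, Differentiable ℝ (φ i))
    (hψd : ∀ i, Differentiable ℝ (ψ i))
    (h : EuclideanSpace ℝ (Fin dz) → EuclideanSpace ℝ (Fin dz)) (ρ : ℝ) (hρ : ρ ≠ 0)
    (hhφ : ∀ i z, φ i z = ∑ k, h z k • fderiv ℝ (φ i) z (EuclideanSpace.single k 1))
    (hhψ : ∀ i z, ψ i z = ρ • ∑ k, h z k • fderiv ℝ (ψ i) z (EuclideanSpace.single k 1))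
    (Q : EuclideanSpace ℝ (Fin dz) → ℝ)
    (hQ : ∀ z, Q z = (1 / (m : ℝ)) * ∑ i, (Qi i (φ i z) + Ri i (ψ i z)))
    (z : EuclideanSpace ℝ (Fin dz)) (hz : IsLocalMin Q z) :
    ∃ ε₀ > (0 : ℝ), ∀ ε : ℝ, 0 ≤ ε → ε < ε₀ →
      ∀ (s : ℕ) (S : Fin s → EuclideanSpace ℝ (Fin dz)),
        (∀ j, ‖S j‖ ≤ 1 ∧ ∀ i, φ i (z + ε • S j) = φ i z ∧ ψ i (z + ε • S j) = ψ i z) →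
        ∀ α : Fin dz → Fin s → ℝ,
          Q z ≤ (1 / (m : ℝ)) * ∑ i,
              (Qi i (∑ k, ∑ j, α k j •
                  fderiv ℝ (φ i) (z + ε • S j) (EuclideanSpace.single k 1)) +
               Ri i (∑ k, ∑ j, α k j •
                  fderiv ℝ (ψ i) (z + ε • S j) (EuclideanSpace.single k 1)))
            + ((ρ - 1) / (ρ * m)) * ∑ i, ⟪gradient (Ri i) (ψ i z), ψ i z⟫ :=
  pgb_necessary_condition_general m dz dphi dpsi Qi Ri φ ψ hQd hQc hRd hRc hφd hψd h ρ hρ hhφ hhψ Q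
    hQ z hz
end
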